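/- arXiv:2308.00123 — 2 statements merged into one kernel-verified Lean document; each statement's English description precedes it below -/
import Mathlib

section
/- For every n > 1, the maximal product M_n over partitions of n satisfies M_{n+3} = 3 · M_n. -/
/-
For `n ≥ 2`, `optProd n` is the product of the partition of `n` into parts 3 together with
a single 2 or 4 when `3 ∤ n`. The inequality `a * optProd k ≤ optProd (k + a)` for `a > 0` (a part `a ≥ 5` is no
better than `3` and `a - 3`, since `a ≤ 3 (a - 3)`) shows by induction over the parts that no
partition of `n` beats `optProd n`, and appending parts 3 shows that it is attained. So
`M_n = optProd n`, and `optProd (n + 3) = 3 * optProd n` for `n ≥ 2` holds by construction.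
-/

noncomputable def maxNorm (n : ℕ) : ℕ :=
  (Finset.univ : Finset (Nat.Partition n)).sup fun p => p.parts.prod

def optProd : ℕ → ℕ
  | 0 => 1
  | 1 => 1
  | 2 => 2
  | 3 => 3
  | 4 => 4
  | n + 5 => 3 * optProd (n + 2)

theorem optProd_add_three {m : ℕ} (hm : 2 ≤ m) : optProd (m + 3) = 3 * optProd m := by
  obtain ⟨k, rfl⟩ : ∃ k, m = k + 2 := ⟨m - 2, by omega⟩
  rfl

theorem three_mul_optProd_le (m : ℕ) : 3 * optProd m ≤ optProd (m + 3) := by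
  match m with
  | 0 | 1 => decide
  | k + 2 => exact (optProd_add_three (by omega)).ge

theorem mul_optProd_le (a k : ℕ) (ha : 0 < a) : a * optProd k ≤ optProd (k + a) := by
  if hk : 5 ≤ k then
    obtain ⟨j, rfl⟩ : ∃ j, k = j + 3 := ⟨k - 3, by omega⟩
    have ih := mul_optProd_le a j ha
    rw [optProd_add_three (by omega), show j + 3 + a = j + a + 3 by ring,
      optProd_add_three (by omega)]
    linarith
  else if ha5 : 5 ≤ a then
    obtain ⟨b, rfl⟩ : ∃ b, a = b + 3 := ⟨a - 3, by omega⟩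
    have ih := mul_optProd_le b k (by omega)
    calc (b + 3) * optProd k ≤ 3 * (b * optProd k) := by
          rw [← mul_assoc]; exact Nat.mul_le_mul_right _ (by omega)
      _ ≤ 3 * optProd (k + b) := Nat.mul_le_mul_left 3 ih
      _ ≤ optProd (k + (b + 3)) := three_mul_optProd_le _
  else
    interval_cases a <;> interval_cases k <;> decide
termination_by a + k

theorem prod_le_optProd_sum (s : Multiset ℕ) : s.prod ≤ optProd s.sum := by
  induction s using Multiset.induction with
  | empty => decide
  | cons a s ih =>
    rw [Multiset.prod_cons, Multiset.sum_cons, add_comm]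
    rcases Nat.eq_zero_or_pos a with rfl | ha
    · simp
    · exact (Nat.mul_le_mul_left a ih).trans (mul_optProd_le a _ ha)

theorem maxNorm_le_optProd (m : ℕ) : maxNorm m ≤ optProd m :=
  Finset.sup_le fun p _ => by simpa only [p.parts_sum] using prod_le_optProd_sum p.parts

theorem prod_le_maxNorm {m : ℕ} {s : Multiset ℕ} (hs : s.sum = m) : s.prod ≤ maxNorm m := by
  by_cases h0 : (0 : ℕ) ∈ s
  · simp [Multiset.prod_eq_zero h0]
  · have hp : (Nat.Partition.ofSums m s hs).parts = s :=
      Multiset.filter_eq_self.2 fun a ha h => h0 (h ▸ ha)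
    exact hp ▸ Finset.le_sup (f := fun p : Nat.Partition m => p.parts.prod) (Finset.mem_univ _)

theorem three_mul_maxNorm_le (m : ℕ) : 3 * maxNorm m ≤ maxNorm (m + 3) := by
  obtain ⟨p, -, hp⟩ := Finset.exists_mem_eq_sup (Finset.univ : Finset (Nat.Partition m))
    Finset.univ_nonempty fun p => p.parts.prod
  rw [show maxNorm m = p.parts.prod from hp, ← Multiset.prod_cons]
  exact prod_le_maxNorm (by rw [Multiset.sum_cons, p.parts_sum, add_comm])

theorem optProd_le_maxNorm (m : ℕ) : optProd m ≤ maxNorm m := by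
  if hm : 5 ≤ m then
    obtain ⟨k, rfl⟩ : ∃ k, m = k + 3 := ⟨m - 3, by omega⟩
    rw [optProd_add_three (by omega)]
    exact (Nat.mul_le_mul_left 3 (optProd_le_maxNorm k)).trans (three_mul_maxNorm_le k)
  else
    interval_cases m
    exacts [prod_le_maxNorm (s := 0) rfl, prod_le_maxNorm (s := {1}) rfl,
      prod_le_maxNorm (s := {2}) rfl, prod_le_maxNorm (s := {3}) rfl,
      prod_le_maxNorm (s := {4}) rfl]
termination_by m

theorem maxNorm_eq_optProd (m : ℕ) : maxNorm m = optProd m :=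
  (maxNorm_le_optProd m).antisymm (optProd_le_maxNorm m)

theorem stmt7 (n : ℕ) (hn : 1 < n) : maxNorm (n + 3) = 3 * maxNorm n := by
  rw [maxNorm_eq_optProd, maxNorm_eq_optProd, optProd_add_three hn]
end

section
/- The norm of a partition of n is always at most 3^(n/3) · (4/3) for n ≥ 1; equivalently, for any multiset of positive integers with sum n, the product of its elements is at most (4/3)·3^(n/3). -/
/-! Since `k ^ 3 ≤ 3 ^ k` for every natural number `k`, each part `k` of a partition is at most
`3 ^ (k / 3)`; multiplying over the parts gives `∏ k ≤ 3 ^ (n / 3)`, already stronger than the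
bound with the factor `4 / 3`. -/

theorem Nat.pow_three_le_three_pow (k : ℕ) : k ^ 3 ≤ 3 ^ k := by
  rcases lt_or_ge k 3 with hk | hk
  · interval_cases k <;> norm_num
  · induction k, hk using Nat.le_induction with
    | base => norm_num
    | succ n hn ih =>
      calc (n + 1) ^ 3 ≤ 3 * n ^ 3 := by
            nlinarith [Nat.mul_le_mul_right (n ^ 2) hn, Nat.mul_le_mul_right n hn]
        _ ≤ 3 * 3 ^ n := Nat.mul_le_mul_left 3 ih
        _ = 3 ^ (n + 1) := by ring

theorem Nat.cast_le_three_rpow_div_three (k : ℕ) : (k : ℝ) ≤ (3 : ℝ) ^ ((k : ℝ) / 3) := by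
  have hcube : ((3 : ℝ) ^ ((k : ℝ) / 3)) ^ 3 = 3 ^ k := by
    rw [← Real.rpow_natCast, ← Real.rpow_mul (by norm_num)]
    norm_num
  rw [← pow_le_pow_iff_left₀ (Nat.cast_nonneg k) (by positivity) three_ne_zero, hcube]
  exact_mod_cast k.pow_three_le_three_pow

theorem Multiset.cast_prod_le_three_rpow_sum_div_three (s : Multiset ℕ) :
    (s.prod : ℝ) ≤ (3 : ℝ) ^ ((s.sum : ℝ) / 3) := by
  induction s using Multiset.induction with
  | empty => simp
  | cons a s ih =>
    rw [Multiset.prod_cons, Multiset.sum_cons, Nat.cast_mul, Nat.cast_add, add_div,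
      Real.rpow_add (by norm_num)]
    exact mul_le_mul a.cast_le_three_rpow_div_three ih (by positivity) (by positivity)

theorem stmt15_general (n : ℕ) (lam : Nat.Partition n) :
    (lam.parts.prod : ℝ) ≤ (4 / 3) * (3 : ℝ) ^ ((n : ℝ) / 3) := by
  have hprod := lam.parts.cast_prod_le_three_rpow_sum_div_three
  rw [lam.parts_sum] at hprod
  exact hprod.trans (le_mul_of_one_le_left (by positivity) (by norm_num))

theorem stmt15 (n : ℕ) (hn : 1 ≤ n) (lam : Nat.Partition n) :
    (lam.parts.prod : ℝ) ≤ (4 / 3) * (3 : ℝ) ^ ((n : ℝ) / 3) :=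
  stmt15_general n lam
end
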